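/- Let p be an odd prime and let k, n be integers with 6 ≤ 2k ≤ n and n ≤ p/k + (k+1)/2 (inequality of rational numbers). Take α_i = i−1 ∈ F_p for 1 ≤ i ≤ n and r = 1. Then every k×k submatrix of the corresponding matrix G_1 is nonsingular, and the code C_1 generated by G_1 is an [n+1,k] MDS code over F_p that is not monomially equivalent to any GRS code of length n+1 over F_p. -/

import Mathlib

open Finset Matrix

/-- Elementary symmetric polynomial `σ_t` evaluated at the values `x 0, …, x (m-1)`. -/
def esymmV {F : Type*} [CommRing F] {m : ℕ} (t : ℕ) (x : Fin m → F) : F :=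
  ∑ A ∈ Finset.univ.powersetCard t, ∏ i ∈ A, x i

/-- Complete homogeneous symmetric polynomial `S_t` evaluated at `x 0, …, x (m-1)`. -/
def hsymmV {F : Type*} [CommRing F] {m : ℕ} (t : ℕ) (x : Fin m → F) : F :=
  ∑ d ∈ Finset.Nat.antidiagonalTuple m t, ∏ i, x i ^ d i

/-- The exponent of the `i`-th row (0-indexed): the elements of
`{0,…,k−r−1} ∪ {k−r+1,…,k}` in increasing order. -/
def expo (k r : ℕ) (i : Fin k) : ℕ := if (i : ℕ) < k - r then (i : ℕ) else (i : ℕ) + 1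

/-- The Vandermonde product `∏_{i<j} (α_j − α_i)`. -/
def vand {F : Type*} [CommRing F] {n : ℕ} (α : Fin n → F) : F :=
  ∏ i : Fin n, ∏ j ∈ Finset.Ioi i, (α j - α i)

/-- The matrix `G_{r,k}`: rows are `(α_1^e, …, α_n^e)` for
`e ∈ {0,…,k−r−1} ∪ {k−r+1,…,k}` in increasing order. -/
def Grk {F : Type*} [Field F] {n : ℕ} (α : Fin n → F) (k r : ℕ) : Matrix (Fin k) (Fin n) F :=
  Matrix.of fun i j => α j ^ expo k r i

/-- The matrix `G_1`: `G_{r,k}` with the extra column `(0,…,0,1)ᵀ` appended. -/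
def G1 {F : Type*} [Field F] {n : ℕ} (α : Fin n → F) (k r : ℕ) :
    Matrix (Fin k) (Fin (n + 1)) F :=
  Matrix.of fun i j =>
    if hj : (j : ℕ) < n then α ⟨j, hj⟩ ^ expo k r i
    else if (i : ℕ) = k - 1 then 1 else 0

/-- The matrix `G_2`: `G_1` with the extra column `(0,…,0,1,δ)ᵀ` appended
(entry `1` in row `k−1`, i.e. index `k−2`, and `δ` in row `k`, i.e. index `k−1`). -/
def G2 {F : Type*} [Field F] {n : ℕ} (α : Fin n → F) (k r : ℕ) (δ : F) :
    Matrix (Fin k) (Fin (n + 2)) F :=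
  Matrix.of fun i j =>
    if hj : (j : ℕ) < n then α ⟨j, hj⟩ ^ expo k r i
    else if (j : ℕ) = n then (if (i : ℕ) = k - 1 then 1 else 0)
    else (if (i : ℕ) = k - 2 then 1 else if (i : ℕ) = k - 1 then δ else 0)

/-- `u_i = ∏_{j ≠ i} (α_i − α_j)⁻¹`. -/
def uCoef {F : Type*} [Field F] {n : ℕ} (α : Fin n → F) (i : Fin n) : F :=
  ∏ j ∈ Finset.univ.erase i, (α i - α j)⁻¹

/-- `Λ_{r,i} = ∑_{j=0}^{r} (−1)^j σ_j α_i^{(n−k)+(r−1)−j}`. -/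
def Lam {F : Type*} [Field F] {n : ℕ} (α : Fin n → F) (k r : ℕ) (i : Fin n) : F :=
  ∑ j ∈ Finset.range (r + 1), (-1 : F) ^ j * esymmV j α * α i ^ ((n - k) + (r - 1) - j)

/-- Every `k×k` submatrix of `G` is nonsingular. -/
def allSubNonsing {F : Type*} [Field F] {k m : ℕ} (G : Matrix (Fin k) (Fin m) F) : Prop :=
  ∀ c : Fin k → Fin m, Function.Injective c → (G.submatrix id c).det ≠ 0

/-- The linear code spanned by the rows of `G`. -/
def rowSpan {F : Type*} [Field F] {k m : ℕ} (G : Matrix (Fin k) (Fin m) F) :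
    Submodule F (Fin m → F) :=
  Submodule.span F (Set.range fun i => G i)

/-- The dual code `C^⊥ = {x : ∑ x_i c_i = 0 for all c ∈ C}`, as a set. -/
def dualSet {F : Type*} [Field F] {m : ℕ} (C : Set (Fin m → F)) : Set (Fin m → F) :=
  {x | ∀ c ∈ C, ∑ i, x i * c i = 0}

/-- The extended code of `C` with respect to `w`. -/
def extCode {F : Type*} [Field F] {m : ℕ} (C : Set (Fin m → F)) (w : Fin m → F) :
    Set (Fin (m + 1) → F) :=
  {y | ∃ c ∈ C, (∀ i : Fin m, y (Fin.castSucc i) = c i) ∧ y (Fin.last m) = ∑ i, w i * c i}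

/-- `C` is a GRS code of length `m` and dimension `kk` over `F`:
evaluation points are pairwise distinct elements of `F ∪ {∞}` (with `∞ = none`),
the multipliers `v i` are nonzero, and `f(∞)` is the coefficient of `x^(kk−1)`. -/
def isGRS {F : Type*} [Field F] (m kk : ℕ) (C : Set (Fin m → F)) : Prop :=
  ∃ (β : Fin m → Option F) (v : Fin m → F),
    Function.Injective β ∧ (∀ i, v i ≠ 0) ∧
    C = {c | ∃ f : Polynomial F, f.degree < (kk : WithBot ℕ) ∧
      ∀ i, c i = v i * (match β i with
        | some x => Polynomial.eval x f
        | none => f.coeff (kk - 1))}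

/-- Monomial equivalence of codes. -/
def monEquiv {F : Type*} [Field F] {m : ℕ} (C C' : Set (Fin m → F)) : Prop :=
  ∃ (π : Equiv.Perm (Fin m)) (lam : Fin m → F),
    (∀ i, lam i ≠ 0) ∧ C' = {y | ∃ c ∈ C, ∀ i, y i = lam i * c (π i)}

/-!
The map `v ↦ v ᵥ* G₁` sends `v` to the values at the `αⱼ` of `P_v = ∑ vᵢ X^{eᵢ}` (exponents
`0, …, k-2, k`), followed by the coefficient of `X^k`. A kernel vector of a singular `k × k` minor
thus gives `P_v ≠ 0` vanishing either at `k - 1` points with no `X^k` term, impossible for degree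
reasons, or at `k` points `αⱼ`; then `P_v = c ∏ (X - αⱼ)` and its missing `X^{k-1}` term forces
`∑ αⱼ = 0`. For `αᵢ = i - 1` in `F_p` the bound on `n` gives `0 < ∑ αⱼ < p`.

The componentwise square of `C₁` contains the rows of the same matrix built with `2k` in place of
`k`, which are independent, so it has dimension `2k`. The square of a GRS code of dimension `kk`
lies in a GRS code of dimension `2kk - 1`; GRS codes are closed under monomial maps, and
`kk ≤ dim C₁ ≤ k`.
-/

open Polynomial Module Function

namespace Fin

theorem card_mul_card_sub_one_le_two_mul_sum {n : ℕ} (S : Finset (Fin n)) :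
    #S * (#S - 1) ≤ 2 * ∑ j ∈ S, (j : ℕ) := by
  induction S using Finset.induction_on_max with
  | empty => simp
  | insert a S ha ih =>
    have hS : #S ≤ a := by simpa using card_le_card fun x hx => mem_Iio.2 (ha x hx)
    rw [card_insert_of_notMem fun h => (ha a h).false, sum_insert fun h => (ha a h).false,
      Nat.add_sub_cancel]
    rcases Nat.eq_zero_or_pos #S with h | h
    · simp [h]
    · nlinarith [Nat.sub_add_cancel h]

theorem two_mul_sum_add_card_mul_le {n : ℕ} (S : Finset (Fin n)) :
    2 * ∑ j ∈ S, (j : ℕ) + #S * (#S - 1) ≤ 2 * #S * (n - 1) := by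
  have hrev := card_mul_card_sub_one_le_two_mul_sum (S.map revPerm.toEmbedding)
  rw [card_map, sum_map] at hrev
  have hsum : ∑ j ∈ S, (j : ℕ) + ∑ j ∈ S, (revPerm j : ℕ) = #S * (n - 1) := by
    rw [← Finset.sum_add_distrib, Finset.sum_congr rfl fun j _ => ?_, Finset.sum_const,
      smul_eq_mul]
    simp only [revPerm_apply, val_rev]
    omega
  simp only [Equiv.coe_toEmbedding] at hrev
  nlinarith

theorem card_filter_univ_castSucc {n : ℕ} (p : Fin (n + 1) → Prop) [DecidablePred p] :
    #{x | p x} = (if p (last n) then 1 else 0) + #{x : Fin n | p x.castSucc} := by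
  rw [univ_castSuccEmb, filter_cons, apply_ite Finset.card, card_cons, filter_map, card_map]
  split_ifs <;> simp only [zero_add, add_comm 1] <;> rfl

end Fin

theorem two_mul_mul_ne_of_prime {p k n : ℕ} (hp : p.Prime) (hk : 3 ≤ k) (hkn : 2 * k ≤ n) :
    2 * k * n ≠ 2 * p + k * (k + 1) := by
  intro heq
  have hdvd : k ∣ 2 * p := by
    rw [← Nat.dvd_add_left (dvd_mul_right k (k + 1)), ← heq, mul_comm 2 k, mul_assoc]
    exact dvd_mul_right k _
  have hpk : ¬ p ∣ k := fun h => by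
    have := Nat.le_of_dvd (by omega) h
    nlinarith
  have : k ∣ 2 := ((Nat.Prime.coprime_iff_not_dvd hp).2 hpk).symm.dvd_of_dvd_mul_right hdvd
  have := Nat.le_of_dvd two_pos this
  omega

theorem sum_natCast_ne_zero_of_card_eq {p k n : ℕ} [Fact p.Prime] (hk : 2 ≤ k)
    (hbound : 2 * k * n < 2 * p + k * (k + 1)) (T : Finset (Fin n)) (hT : #T = k) :
    ∑ j ∈ T, ((j : ℕ) : ZMod p) ≠ 0 := by
  have hlow := Fin.card_mul_card_sub_one_le_two_mul_sum T
  have hup := Fin.two_mul_sum_add_card_mul_le T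
  rw [hT] at hlow hup
  have hn : k ≤ n := hT ▸ (card_le_univ T).trans_eq (Fintype.card_fin n)
  rw [← Nat.cast_sum, Ne, ZMod.natCast_eq_zero_iff]
  intro hdvd
  have h2 : 2 * 1 ≤ k * (k - 1) := Nat.mul_le_mul hk (by omega)
  have := Nat.le_of_dvd (by omega) hdvd
  obtain ⟨m, rfl⟩ : ∃ m, n = m + 1 := ⟨n - 1, by omega⟩
  obtain ⟨j, rfl⟩ : ∃ j, k = j + 1 := ⟨k - 1, by omega⟩
  simp only [Nat.add_sub_cancel] at hup h2
  nlinarith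

theorem expo_injective (k r : ℕ) : Injective (expo k r) := by
  intro i j h
  simp only [expo] at h
  ext
  split_ifs at h <;> omega

theorem expo_ne_sub (k r : ℕ) (i : Fin k) : expo k r i ≠ k - r := by
  unfold expo; split_ifs <;> omega

theorem expo_le (k r : ℕ) (i : Fin k) : expo k r i ≤ k := by
  have := i.isLt
  unfold expo; split_ifs <;> omega

theorem expo_eq_iff_eq_sub_one {k r : ℕ} (hr : 1 ≤ r) (i : Fin k) :
    expo k r i = k ↔ (i : ℕ) = k - 1 := by
  have := i.isLt
  unfold expo; split_ifs <;> omega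

theorem Polynomial.degree_lt_pred_of_coeff_eq_zero {R : Type*} [Semiring R] {f : R[X]} {n : ℕ}
    (hf : f.degree < n) (hc : f.coeff (n - 1) = 0) : f.degree < ↑(n - 1) := by
  rw [degree_lt_iff_coeff_zero] at hf ⊢
  intro m hm
  rcases (show m = n - 1 ∨ n ≤ m by omega) with rfl | hm
  exacts [hc, hf m hm]

theorem Polynomial.nextCoeff_eq_neg_leadingCoeff_mul_sum {F : Type*} [Field F] {P : F[X]}
    (hP : P ≠ 0) {s : Finset F} (hdeg : P.natDegree ≤ #s) (hroots : ∀ x ∈ s, P.IsRoot x) :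
    P.nextCoeff = -P.leadingCoeff * ∑ x ∈ s, x := by
  have hle : s.val ≤ P.roots :=
    (Multiset.le_iff_subset s.nodup).2 fun x hx => (mem_roots hP).2 (hroots x hx)
  have hroots_eq : P.roots = s.val :=
    (Multiset.eq_of_le_of_card_le hle ((card_roots' P).trans hdeg)).symm
  have hsplit : Splits P :=
    splits_iff_card_roots.2 (le_antisymm (card_roots' P) (hroots_eq ▸ hdeg))
  rw [hsplit.nextCoeff_eq_neg_sum_roots_mul_leadingCoeff, hroots_eq, Finset.sum_val]
  rfl

section G1

variable {F : Type*} [Field F] {n k r : ℕ} {α : Fin n → F}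

noncomputable def rowPoly (k r : ℕ) (v : Fin k → F) : F[X] :=
  ∑ i, C (v i) * X ^ expo k r i

theorem coeff_rowPoly (v : Fin k → F) (d : ℕ) :
    (rowPoly k r v).coeff d = ∑ i, if d = expo k r i then v i else 0 := by
  simp [rowPoly]

theorem coeff_rowPoly_expo (v : Fin k → F) (i : Fin k) :
    (rowPoly k r v).coeff (expo k r i) = v i := by
  rw [coeff_rowPoly, Finset.sum_eq_single i
    (fun j _ hj => if_neg ((expo_injective k r).ne hj.symm)) (by simp), if_pos rfl]

theorem coeff_rowPoly_sub (v : Fin k → F) : (rowPoly k r v).coeff (k - r) = 0 := by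
  simp [coeff_rowPoly, (expo_ne_sub k r _).symm]

theorem natDegree_rowPoly_le (v : Fin k → F) : (rowPoly k r v).natDegree ≤ k :=
  natDegree_sum_le_of_forall_le _ _ fun i _ =>
    (natDegree_C_mul_X_pow_le _ _).trans (expo_le k r i)

theorem rowPoly_eq_zero_iff {v : Fin k → F} : rowPoly k r v = 0 ↔ v = 0 :=
  ⟨fun h => funext fun i => by rw [← coeff_rowPoly_expo v i, h, coeff_zero, Pi.zero_apply],
    by rintro rfl; simp [rowPoly]⟩

@[simp]
theorem G1_apply_castSucc (i : Fin k) (j : Fin n) :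
    G1 α k r i j.castSucc = α j ^ expo k r i := by
  simp [G1]

@[simp]
theorem G1_apply_last (i : Fin k) :
    G1 α k r i (Fin.last n) = if (i : ℕ) = k - 1 then 1 else 0 := by
  simp [G1]

theorem vecMul_G1_castSucc (v : Fin k → F) (j : Fin n) :
    (v ᵥ* G1 α k r) j.castSucc = (rowPoly k r v).eval (α j) := by
  simp [vecMul, dotProduct, rowPoly, eval_finsetSum]

theorem vecMul_G1_last (hr : 1 ≤ r) (v : Fin k → F) :
    (v ᵥ* G1 α k r) (Fin.last n) = (rowPoly k r v).coeff k := by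
  simp [vecMul, dotProduct, coeff_rowPoly, eq_comm (a := k), expo_eq_iff_eq_sub_one hr]

theorem eq_zero_of_vecMul_G1_eq_zero (hα : Injective α) {v : Fin k → F} {T : Finset (Fin n)}
    (hT : k ≤ #T + 1) (hlast : (v ᵥ* G1 α k 1) (Fin.last n) = 0)
    (hzero : ∀ j ∈ T, (v ᵥ* G1 α k 1) j.castSucc = 0) : v = 0 := by
  classical
  rw [← rowPoly_eq_zero_iff (r := 1)]
  rw [vecMul_G1_last le_rfl] at hlast
  have hdeg : (rowPoly k 1 v).degree < ↑(k + 1) :=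
    (degree_le_of_natDegree_le (natDegree_rowPoly_le v)).trans_lt
      (by exact_mod_cast k.lt_succ_self)
  have hdeg' : (rowPoly k 1 v).degree < ↑(k - 1) :=
    degree_lt_pred_of_coeff_eq_zero (degree_lt_pred_of_coeff_eq_zero hdeg hlast)
      (coeff_rowPoly_sub v)
  refine eq_zero_of_degree_lt_of_eval_finset_eq_zero (T.image α) ?_ ?_
  · rw [card_image_of_injective _ hα]
    exact hdeg'.trans_le (by exact_mod_cast (by omega : k - 1 ≤ #T))
  · simpa [← vecMul_G1_castSucc] using hzero

theorem linearIndependent_G1 (hα : Injective α) (hkn : k ≤ n + 1) :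
    LinearIndependent F (G1 α k 1) := by
  refine Matrix.vecMul_injective_iff.1 fun v w (hvw : v ᵥ* G1 α k 1 = w ᵥ* G1 α k 1) => ?_
  rw [← sub_eq_zero]
  have h : ∀ j, ((v - w) ᵥ* G1 α k 1) j = 0 := fun j => by
    rw [Matrix.sub_vecMul, hvw, sub_self, Pi.zero_apply]
  exact eq_zero_of_vecMul_G1_eq_zero hα (T := univ) (by simpa using hkn) (h _) fun j _ => h _

theorem sum_eq_zero_of_vecMul_G1_eq_zero (hα : Injective α) {v : Fin k → F} (hv : v ≠ 0)
    {T : Finset (Fin n)} (hT : #T = k) (hzero : ∀ j ∈ T, (v ᵥ* G1 α k 1) j.castSucc = 0) :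
    ∑ j ∈ T, α j = 0 := by
  classical
  set P := rowPoly k 1 v
  have hk : 0 < k := Nat.pos_of_ne_zero fun h => hv (by subst h; exact Subsingleton.elim _ _)
  have hP : P ≠ 0 := rowPoly_eq_zero_iff.not.2 hv
  have hPk : P.coeff k ≠ 0 := fun h =>
    hv (eq_zero_of_vecMul_G1_eq_zero hα (by omega) ((vecMul_G1_last le_rfl v).trans h) hzero)
  have hdeg : P.natDegree = k :=
    le_antisymm (natDegree_rowPoly_le v) (le_natDegree_of_ne_zero hPk)
  have hvieta := nextCoeff_eq_neg_leadingCoeff_mul_sum hP (s := T.image α)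
    (by rw [card_image_of_injective _ hα, hT, hdeg])
    fun x hx => by
      obtain ⟨j, hj, rfl⟩ := mem_image.1 hx
      exact (vecMul_G1_castSucc v j).symm.trans (hzero j hj)
  rw [nextCoeff_of_natDegree_pos (hdeg ▸ hk), hdeg, coeff_rowPoly_sub,
    sum_image hα.injOn] at hvieta
  simpa [leadingCoeff_ne_zero.2 hP] using hvieta.symm

theorem allSubNonsing_G1 (hα : Injective α)
    (hsum : ∀ T : Finset (Fin n), #T = k → ∑ j ∈ T, α j ≠ 0) :
    allSubNonsing (G1 α k 1) := by
  classical
  intro c hc hdet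
  obtain ⟨v, hv, hker⟩ := Matrix.exists_vecMul_eq_zero_iff.2 hdet
  have hzero : ∀ i, (v ᵥ* G1 α k 1) (c i) = 0 := fun i => congrFun hker i
  set T : Finset (Fin n) := {j | j.castSucc ∈ Set.range c}
  have hT : ∀ j ∈ T, (v ᵥ* G1 α k 1) j.castSucc = 0 := fun j hj => by
    obtain ⟨i, hi⟩ := (mem_filter.1 hj).2
    exact hi ▸ hzero i
  have hcard : (if Fin.last n ∈ Set.range c then 1 else 0) + #T = k := by
    rw [← Fin.card_filter_univ_castSucc]
    simp [card_image_of_injective _ hc]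
  split_ifs at hcard with hlast
  · obtain ⟨i, hi⟩ := hlast
    exact hv (eq_zero_of_vecMul_G1_eq_zero hα (by omega) (hi ▸ hzero i) hT)
  · exact hsum T (by omega) (sum_eq_zero_of_vecMul_G1_eq_zero hα hv (by omega) hT)

end G1

section GRS

variable {F : Type*} [Field F] {m kk : ℕ}

noncomputable def grsEval (kk : ℕ) : Option F → F[X] →ₗ[F] F
  | some x => leval x
  | none => lcoeff F (kk - 1)

noncomputable def grsCode (kk : ℕ) (β : Fin m → Option F) (v : Fin m → F) :
    Submodule F (Fin m → F) :=
  (degreeLT F kk).map (LinearMap.pi fun i => v i • grsEval kk (β i))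

@[simp]
theorem grsEval_some (kk : ℕ) (x : F) : grsEval kk (some x) = leval x := rfl

@[simp]
theorem grsEval_none (kk : ℕ) : grsEval (F := F) kk none = lcoeff F (kk - 1) := rfl

theorem isGRS_iff {C : Set (Fin m → F)} :
    isGRS m kk C ↔ ∃ (β : Fin m → Option F) (v : Fin m → F),
      Injective β ∧ (∀ i, v i ≠ 0) ∧ C = grsCode kk β v := by
  refine exists₂_congr fun β v => and_congr_right' <| and_congr_right' <| Eq.congr_right ?_
  ext c
  simp only [grsCode, Set.mem_ofPred_eq, SetLike.mem_coe, Submodule.mem_map, mem_degreeLT,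
    funext_iff, LinearMap.pi_apply, LinearMap.smul_apply, smul_eq_mul]
  refine exists_congr fun f => and_congr_right' <| forall_congr' fun i => ?_
  rw [eq_comm]
  congr! 2
  cases β i <;> rfl

theorem finrank_grsCode_le (kk : ℕ) (β : Fin m → Option F) (v : Fin m → F) :
    finrank F (grsCode kk β v) ≤ kk :=
  (Submodule.finrank_map_le _ _).trans ((degreeLTEquiv F kk).finrank_eq.trans (by simp)).le

theorem le_finrank_grsCode {β : Fin m → Option F} {v : Fin m → F} (hβ : Injective β)
    (hv : ∀ i, v i ≠ 0) (hkk : kk ≤ m) : kk ≤ finrank F (grsCode kk β v) := by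
  classical
  set E : F[X] →ₗ[F] (Fin m → F) := LinearMap.pi fun i => v i • grsEval kk (β i)
  have hinj : Injective (E ∘ₗ (degreeLT F kk).subtype) := by
    rw [← LinearMap.ker_eq_bot, LinearMap.ker_eq_bot']
    rintro ⟨f, hf⟩ hEf
    rw [mem_degreeLT] at hf
    have hvan : ∀ i, grsEval kk (β i) f = 0 := fun i =>
      (mul_eq_zero.1 (congrFun hEf i)).resolve_left (hv i)
    set s := (univ.image β).eraseNone
    have hroots : ∀ x ∈ s, f.eval x = 0 := fun x hx => by
      obtain ⟨i, -, hi⟩ := mem_image.1 (mem_eraseNone.1 hx)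
      simpa [hi] using hvan i
    have hdeg : f.degree < #s := by
      by_cases hnone : none ∈ univ.image β
      · obtain ⟨i, -, hi⟩ := mem_image.1 hnone
        have hcoeff : f.coeff (kk - 1) = 0 := by simpa [hi] using hvan i
        rw [card_eraseNone_of_mem hnone, card_image_of_injective _ hβ, card_fin]
        exact (degree_lt_pred_of_coeff_eq_zero hf hcoeff).trans_le
          (by exact_mod_cast (by omega : kk - 1 ≤ m - 1))
      · rw [card_eraseNone_of_not_mem hnone, card_image_of_injective _ hβ, card_fin]
        exact hf.trans_le (by exact_mod_cast hkk)
    exact Subtype.ext (eq_zero_of_degree_lt_of_eval_finset_eq_zero s hdeg hroots)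
  have hrange : LinearMap.range (E ∘ₗ (degreeLT F kk).subtype) = grsCode kk β v := by
    rw [LinearMap.range_comp, Submodule.range_subtype]
    rfl
  rw [← hrange, LinearMap.finrank_range_of_inj hinj, (degreeLTEquiv F kk).finrank_eq,
    finrank_fin_fun]

theorem grsCode_mul_le (β : Fin m → Option F) (v : Fin m → F) :
    grsCode kk β v * grsCode kk β v ≤ grsCode (2 * kk - 1) β (v * v) := by
  rw [Submodule.mul_le]
  rintro _ ⟨f, hf, rfl⟩ _ ⟨g, hg, rfl⟩
  rw [SetLike.mem_coe, mem_degreeLT] at hf hg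
  have hf' : f.natDegree ≤ kk - 1 := natDegree_le_iff_coeff_eq_zero.2 fun N hN =>
    (degree_lt_iff_coeff_zero f kk).1 hf N (by omega)
  have hg' : g.natDegree ≤ kk - 1 := natDegree_le_iff_coeff_eq_zero.2 fun N hN =>
    (degree_lt_iff_coeff_zero g kk).1 hg N (by omega)
  refine ⟨f * g, mem_degreeLT.2 ?_, funext fun i => ?_⟩
  · rcases Nat.eq_zero_or_pos kk with rfl | hkk
    · simp_all
    · exact (degree_le_of_natDegree_le (natDegree_mul_le_of_le hf' hg')).trans_lt
        (by exact_mod_cast (by omega : kk - 1 + (kk - 1) < 2 * kk - 1))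
  · simp only [LinearMap.pi_apply, LinearMap.smul_apply, smul_eq_mul, Pi.mul_apply]
    cases hβ : β i with
    | some x => simp only [grsEval_some, leval_apply, eval_mul]; ring
    | none =>
      simp only [grsEval_none, lcoeff_apply]
      rw [show 2 * kk - 1 - 1 = (kk - 1) + (kk - 1) by omega,
        coeff_mul_add_eq_of_natDegree_le hf' hg']
      ring

noncomputable def monomialMap (lam : Fin m → F) (π : Equiv.Perm (Fin m)) :
    (Fin m → F) →ₗ[F] (Fin m → F) :=
  LinearMap.pi fun i => lam i • LinearMap.proj (π i)

@[simp]
theorem monomialMap_apply (lam : Fin m → F) (π : Equiv.Perm (Fin m)) (c : Fin m → F)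
    (i : Fin m) :
    monomialMap lam π c i = lam i * c (π i) := rfl

theorem grsCode_map_monomialMap (lam : Fin m → F) (π : Equiv.Perm (Fin m))
    (β : Fin m → Option F) (v : Fin m → F) :
    (grsCode kk β v).map (monomialMap lam π) = grsCode kk (β ∘ π) (lam * v ∘ π) := by
  rw [grsCode, grsCode, ← Submodule.map_comp]
  congr 1
  ext f i
  simp [mul_assoc]

theorem isGRS_of_monEquiv {C C' : Set (Fin m → F)} (h : monEquiv C C') (hC' : isGRS m kk C') :
    isGRS m kk C := by
  obtain ⟨π, lam, hlam, rfl⟩ := h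
  obtain ⟨β, v, hβ, hv, hC'⟩ := isGRS_iff.1 hC'
  refine isGRS_iff.2 ⟨β ∘ π.symm, (fun j => (lam (π.symm j))⁻¹) * v ∘ π.symm,
    hβ.comp π.symm.injective, fun j => by simp [hlam, hv], ?_⟩
  rw [← grsCode_map_monomialMap, Submodule.map_coe, ← hC']
  ext c
  constructor
  · intro hc
    exact ⟨_, ⟨c, hc, fun i => rfl⟩, funext fun j => by simp [hlam]⟩
  · rintro ⟨y, ⟨c', hc', hy⟩, rfl⟩
    convert hc' using 1
    ext j
    simp [hy, hlam]

end GRS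

section NonGRS

variable {F : Type*} [Field F] {n k : ℕ} {α : Fin n → F}

theorem exists_expo_add_eq (hk : 3 ≤ k) (t : Fin (2 * k)) :
    ∃ a b : Fin k, expo k 1 a + expo k 1 b = expo (2 * k) 1 t ∧
      ((a : ℕ) = k - 1 ∧ (b : ℕ) = k - 1 ↔ (t : ℕ) = 2 * k - 1) := by
  have ht := t.isLt
  by_cases hsmall : (t : ℕ) ≤ 2 * k - 4
  · refine ⟨⟨min (t : ℕ) (k - 2), by omega⟩, ⟨t - min (t : ℕ) (k - 2), by omega⟩, ?_,
      by simp; omega⟩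
    simp only [expo]
    split_ifs <;> simp_all <;> omega
  · refine ⟨⟨t - k, by omega⟩, ⟨k - 1, by omega⟩, ?_, by simp; omega⟩
    simp only [expo]
    split_ifs <;> simp_all <;> omega

theorem G1_mul_G1_eq {a b : Fin k} {t : Fin (2 * k)}
    (hexpo : expo k 1 a + expo k 1 b = expo (2 * k) 1 t)
    (hlast : (a : ℕ) = k - 1 ∧ (b : ℕ) = k - 1 ↔ (t : ℕ) = 2 * k - 1) :
    G1 α k 1 a * G1 α k 1 b = G1 α (2 * k) 1 t := by
  ext j
  induction j using Fin.lastCases with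
  | last =>
    simp only [Pi.mul_apply, G1_apply_last, ← hlast]
    split_ifs <;> simp_all
  | cast j => simp [← hexpo, pow_add]

theorem finrank_rowSpan_G1_le : finrank F (rowSpan (G1 α k 1)) ≤ k :=
  (finrank_range_le_card _).trans_eq (Fintype.card_fin k)

theorem two_mul_le_finrank_rowSpan_G1_mul (hα : Injective α) (hk : 3 ≤ k)
    (hkn : 2 * k ≤ n + 1) :
    2 * k ≤ finrank F (rowSpan (G1 α k 1) * rowSpan (G1 α k 1)) := by
  have hmem : ∀ t, G1 α (2 * k) 1 t ∈ rowSpan (G1 α k 1) * rowSpan (G1 α k 1) := fun t => by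
    obtain ⟨a, b, hexpo, hlast⟩ := exists_expo_add_eq hk t
    rw [← G1_mul_G1_eq hexpo hlast]
    exact Submodule.mul_mem_mul (Submodule.subset_span ⟨a, rfl⟩)
      (Submodule.subset_span ⟨b, rfl⟩)
  calc 2 * k = finrank F (Submodule.span F (Set.range (G1 α (2 * k) 1))) := by
        rw [finrank_span_eq_card (linearIndependent_G1 hα hkn), Fintype.card_fin]
    _ ≤ _ := Submodule.finrank_mono (Submodule.span_le.2 (Set.range_subset_iff.2 hmem))

theorem not_isGRS_rowSpan_G1 (hα : Injective α) (hk : 3 ≤ k) (hkn : 2 * k ≤ n + 1) {kk : ℕ}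
    (hkk : kk ≤ n + 1) : ¬ isGRS (n + 1) kk (rowSpan (G1 α k 1) : Set (Fin (n + 1) → F)) := by
  rw [isGRS_iff]
  rintro ⟨β, v, hβ, hv, hC⟩
  have hC : rowSpan (G1 α k 1) = grsCode kk β v := SetLike.coe_injective hC
  have hdim : kk ≤ k := (le_finrank_grsCode hβ hv hkk).trans (hC ▸ finrank_rowSpan_G1_le)
  have hsq := two_mul_le_finrank_rowSpan_G1_mul hα hk hkn
  rw [hC] at hsq
  have hsq' := (Submodule.finrank_mono (grsCode_mul_le (kk := kk) β v)).trans
    (finrank_grsCode_le _ β (v * v))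
  omega

end NonGRS

theorem C1_nonGRS_MDS_prime_general (p : ℕ) [Fact p.Prime] (k n : ℕ)
    (h6 : 6 ≤ 2 * k) (hkn : 2 * k ≤ n)
    (hbound : (n : ℚ) ≤ (p : ℚ) / (k : ℚ) + ((k : ℚ) + 1) / 2) :
    allSubNonsing (G1 (fun i : Fin n => ((i : ℕ) : ZMod p)) k 1) ∧
    ∀ (kk : ℕ), 2 ≤ kk → kk ≤ n + 1 → ∀ C' : Set (Fin (n + 1) → ZMod p),
      isGRS (n + 1) kk C' →
      ¬ monEquiv
        (rowSpan (G1 (fun i : Fin n => ((i : ℕ) : ZMod p)) k 1) : Set (Fin (n + 1) → ZMod p))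
        C' := by
  have hk : 3 ≤ k := by omega
  have hbound : 2 * k * n < 2 * p + k * (k + 1) := by
    have hk0 : (0 : ℚ) < k := Nat.cast_pos.2 (by omega)
    rw [div_add_div _ _ hk0.ne' two_ne_zero, le_div_iff₀ (by positivity)] at hbound
    refine lt_of_le_of_ne ?_ (two_mul_mul_ne_of_prime Fact.out hk hkn)
    exact_mod_cast (by push_cast; linarith :
      ((2 * k * n : ℕ) : ℚ) ≤ ((2 * p + k * (k + 1) : ℕ) : ℚ))
  have hnp : n < p := by nlinarith
  have hα : Injective fun i : Fin n => ((i : ℕ) : ZMod p) := fun i j h =>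
    Fin.ext (CharP.natCast_injOn_Iio (ZMod p) p (i.isLt.trans hnp) (j.isLt.trans hnp) h)
  exact ⟨allSubNonsing_G1 hα (sum_natCast_ne_zero_of_card_eq (by omega) hbound),
    fun kk _ hkk C' hC' hmon =>
      not_isGRS_rowSpan_G1 hα hk (by omega) hkk (isGRS_of_monEquiv hmon hC')⟩

/-- Corollary 4.8: for an odd prime `p` and `6 ≤ 2k ≤ n ≤ p/k + (k+1)/2`, taking
`α_i = i − 1` and `r = 1`, the code `C_1` is an `[n+1,k]` non-GRS MDS code over `F_p`. -/
theorem C1_nonGRS_MDS_prime (p : ℕ) [Fact p.Prime] (hodd : Odd p) (k n : ℕ)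
    (h6 : 6 ≤ 2 * k) (hkn : 2 * k ≤ n)
    (hbound : (n : ℚ) ≤ (p : ℚ) / (k : ℚ) + ((k : ℚ) + 1) / 2) :
    allSubNonsing (G1 (fun i : Fin n => ((i : ℕ) : ZMod p)) k 1) ∧
    ∀ (kk : ℕ), 2 ≤ kk → kk ≤ n + 1 → ∀ C' : Set (Fin (n + 1) → ZMod p),
      isGRS (n + 1) kk C' →
      ¬ monEquiv
        (rowSpan (G1 (fun i : Fin n => ((i : ℕ) : ZMod p)) k 1) : Set (Fin (n + 1) → ZMod p))
        C' :=
  C1_nonGRS_MDS_prime_general p k n h6 hkn hbound
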